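/- arXiv:0807.4727 — 2 statements merged into one kernel-verified Lean document; each statement's English description precedes it below -/
import Mathlib

section
/- Let ω = e^{2πI/9} and t ≥ 6. The vectors j = (0,...,0,3,3,6,6) with t-4 leading zeros and j' = (0,...,0,1,2,4,5,7,8) with t-6 leading zeros are distinct weakly increasing vectors with entries in {0,...,8}, yet Σ_i ω^{j_i} = Σ_i ω^{j'_i} and Π_i ω^{j_i} = Π_i ω^{j'_i}. -/
/-!
Both sums vanish up to the padding: the six exponents `1, 2, 4, 5, 7, 8` are those of the
primitive ninth roots of unity, whose sum is `μ(9) = 0`, while `ω ^ 3` is a primitive cube root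
of unity, so `ω ^ 3 + ω ^ 3 + ω ^ 6 + ω ^ 6 = -2` makes up for the two extra leading zeros of `j`.
The products are `ω ^ 18` and `ω ^ 27`, both equal to `1`; the exponent sums also tell the
vectors apart.
-/

/-- The vector of length `t` obtained by padding the list `l` with `t - l.length`
leading zeros. -/
def padVec (t : ℕ) (l : List ℕ) : Fin t → ℕ :=
  fun i => (List.replicate (t - l.length) 0 ++ l).getD i 0

section padVec

variable {t : ℕ} {l : List ℕ}

theorem ofFn_padVec (h : l.length ≤ t) :
    List.ofFn (padVec t l) = List.replicate (t - l.length) 0 ++ l := by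
  apply List.ext_getElem (by simp; omega)
  intro i _ hi
  rw [List.getElem_ofFn]
  exact List.getD_eq_getElem _ _ hi

theorem sum_padVec {M : Type*} [AddCommMonoid M] (h : l.length ≤ t) (f : ℕ → M) :
    ∑ i, f (padVec t l i) = (t - l.length) • f 0 + (l.map f).sum := by
  rw [← List.sum_ofFn, ← Function.comp_def, ← List.map_ofFn, ofFn_padVec h]
  simp

theorem monotone_padVec (h : l.length ≤ t) (hl : l.SortedLE) : Monotone (padVec t l) := by
  rw [← List.sortedLE_ofFn_iff, ofFn_padVec h, List.sortedLE_iff_pairwise, List.pairwise_append]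
  refine ⟨(List.sortedLE_replicate _).pairwise, hl.pairwise, fun a ha b _ => ?_⟩
  rw [(List.mem_replicate.1 ha).2]
  exact Nat.zero_le b

theorem padVec_mem {s : Set ℕ} (h : l.length ≤ t) (h0 : 0 ∈ s) (hl : ∀ x ∈ l, x ∈ s)
    (i : Fin t) : padVec t l i ∈ s := by
  have hi : padVec t l i ∈ List.ofFn (padVec t l) := List.mem_ofFn.2 ⟨i, rfl⟩
  rw [ofFn_padVec h, List.mem_append, List.mem_replicate] at hi
  rcases hi with ⟨-, hi⟩ | hi
  · rwa [hi]
  · exact hl _ hi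

end padVec

namespace IsPrimitiveRoot

variable {R : Type*} [CommRing R] [IsDomain R] {ζ : R}

theorem one_add_pow_three_add_pow_six (hζ : IsPrimitiveRoot ζ 9) : 1 + ζ ^ 3 + ζ ^ 6 = 0 := by
  have h := (hζ.pow (by norm_num) (by norm_num : 9 = 3 * 3)).geom_sum_eq_zero (by norm_num)
  simpa [Finset.sum_range_succ, ← pow_mul] using h

theorem sum_primitive_pows_nine (hζ : IsPrimitiveRoot ζ 9) :
    ζ + ζ ^ 2 + ζ ^ 4 + ζ ^ 5 + ζ ^ 7 + ζ ^ 8 = 0 := by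
  have h := hζ.geom_sum_eq_zero (by norm_num)
  simp only [Finset.sum_range_succ, Finset.sum_range_zero] at h
  linear_combination h - hζ.one_add_pow_three_add_pow_six

end IsPrimitiveRoot

theorem sum_pow_padVec_eq {R : Type*} [CommRing R] [IsDomain R] {ζ : R}
    (hζ : IsPrimitiveRoot ζ 9) {t : ℕ} (ht : 6 ≤ t) :
    ∑ i, ζ ^ padVec t [3, 3, 6, 6] i = ∑ i, ζ ^ padVec t [1, 2, 4, 5, 7, 8] i := by
  obtain ⟨k, rfl⟩ : ∃ k, t = k + 6 := ⟨t - 6, by omega⟩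
  rw [sum_padVec (by simp) (ζ ^ ·), sum_padVec (by simp) (ζ ^ ·)]
  simp only [List.length_cons, List.length_nil, List.map_cons, List.map_nil, List.sum_cons,
    List.sum_nil, pow_zero, nsmul_eq_mul, show k + 6 - 4 = k + 2 by omega, Nat.add_sub_cancel]
  push_cast
  linear_combination 2 * hζ.one_add_pow_three_add_pow_six - hζ.sum_primitive_pows_nine

/-- For `ω = e^{2πI/9}` and `t ≥ 6`, the distinct weakly increasing
vectors `(0,...,0,3,3,6,6)` and `(0,...,0,1,2,4,5,7,8)` with entries in `{0,...,8}`
have equal sums and equal products of the corresponding powers of `ω`. -/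
theorem gbg_stmt_7 (t : ℕ) (ht : 6 ≤ t) :
    padVec t [3, 3, 6, 6] ≠ padVec t [1, 2, 4, 5, 7, 8] ∧
    Monotone (padVec t [3, 3, 6, 6]) ∧ Monotone (padVec t [1, 2, 4, 5, 7, 8]) ∧
    (∀ i, padVec t [3, 3, 6, 6] i < 9) ∧ (∀ i, padVec t [1, 2, 4, 5, 7, 8] i < 9) ∧
    (∑ i, Complex.exp (2 * (Real.pi : ℂ) * Complex.I / 9) ^ padVec t [3, 3, 6, 6] i =
     ∑ i, Complex.exp (2 * (Real.pi : ℂ) * Complex.I / 9) ^ padVec t [1, 2, 4, 5, 7, 8] i) ∧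
    (∏ i, Complex.exp (2 * (Real.pi : ℂ) * Complex.I / 9) ^ padVec t [3, 3, 6, 6] i =
     ∏ i, Complex.exp (2 * (Real.pi : ℂ) * Complex.I / 9) ^ padVec t [1, 2, 4, 5, 7, 8] i) := by
  have hω : IsPrimitiveRoot (Complex.exp (2 * (Real.pi : ℂ) * Complex.I / 9)) 9 := by
    simpa using Complex.isPrimitiveRoot_exp 9 (by norm_num)
  have h₁ : [3, 3, 6, 6].length ≤ t := by simp; omega
  have h₂ : [1, 2, 4, 5, 7, 8].length ≤ t := by simp; omega
  have hsum₁ : ∑ i, padVec t [3, 3, 6, 6] i = 18 := by simpa using sum_padVec h₁ id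
  have hsum₂ : ∑ i, padVec t [1, 2, 4, 5, 7, 8] i = 27 := by simpa using sum_padVec h₂ id
  refine ⟨fun h => by rw [h, hsum₂] at hsum₁; omega,
    monotone_padVec h₁ (by decide), monotone_padVec h₂ (by decide),
    padVec_mem (s := Set.Iio 9) h₁ (by simp) (by simp),
    padVec_mem (s := Set.Iio 9) h₂ (by simp) (by simp), sum_pow_padVec_eq hω ht, ?_⟩
  rw [Finset.prod_pow_eq_pow_sum, Finset.prod_pow_eq_pow_sum, hsum₁, hsum₂,
    (hω.pow_eq_one_iff_dvd 18).2 (by norm_num), (hω.pow_eq_one_iff_dvd 27).2 (by norm_num)]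
end

section
/- The GBG-rank mod 3 of a 4-core partition takes exactly the five values −1, 0, 1, −ω, −ω², where ω = e^{2πI/3}. -/
/-- A partition, given by its weakly decreasing sequence of parts
(indexed from 0, eventually zero). -/
structure YPartition where
  parts : ℕ → ℕ
  antitone : Antitone parts
  finite_support : ∃ N, ∀ n, N ≤ n → parts n = 0

namespace YPartition

/-- `rcount P s c` is the number of cells of the Young diagram of `P` labelled `c` in
the `s`-residue diagram: the cell in row `a`, column `b` (0-indexed) is labelled
`(b - a) mod s`. -/
noncomputable def rcount (P : YPartition) (s c : ℕ) : ℕ :=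
  Set.ncard {p : ℕ × ℕ | p.2 < P.parts p.1 ∧ ((p.2 : ℤ) - (p.1 : ℤ)) % (s : ℤ) = (c : ℤ)}

/-- The GBG-rank of `P` mod `s`: `∑_{c=0}^{s-1} r_c(P,s) ω_s^c` with `ω_s = e^{2πI/s}`. -/
noncomputable def gbg (P : YPartition) (s : ℕ) : ℂ :=
  ∑ c ∈ Finset.range s,
    (P.rcount s c : ℂ) * Complex.exp (2 * (Real.pi : ℂ) * Complex.I / (s : ℂ)) ^ c

/-- The parts of the conjugate partition of `P`. -/
noncomputable def conjParts (P : YPartition) (j : ℕ) : ℕ :=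
  Set.ncard {i : ℕ | j < P.parts i}

/-- The hook length of the cell in row `i`, column `j` (0-indexed). -/
noncomputable def hookLength (P : YPartition) (i j : ℕ) : ℕ :=
  (P.parts i - j) + (P.conjParts j - i) - 1

/-- `P` is a `t`-core: the Young diagram of `P` has no rim hook of length `t`,
equivalently no cell of `P` has hook length `t`. -/
noncomputable def IsCore (t : ℕ) (P : YPartition) : Prop :=
  ∀ i j, j < P.parts i → P.hookLength i j ≠ t

/-- The `n`-vector of `P` mod `t`: `n_i = r_i - r_{i+1}` (indices mod `t`). -/
noncomputable def nvec (P : YPartition) (t i : ℕ) : ℤ :=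
  (P.rcount t i : ℤ) - (P.rcount t ((i + 1) % t) : ℤ)

end YPartition

/-!
Read a partition from its last row upwards, one row at a time. Putting a first row of length `q`
on top of `Q` multiplies the rank by `ω⁻¹ = ω²` and adds `1 + ω + ⋯ + ω^(q-1)`, which depends only
on `q mod 3`; so the rank stays in `ℤ + ℤω`. The hook condition on the new first row forces
`q - 3` to be a beta number of `Q`: hence `q` exceeds the old first row by at most `3`, and
whether the step keeps a 4-core depends only on which of `λ₀ - 1, λ₀ - 2, λ₀ - 3` are beta
numbers of `Q`. Rank coefficients, `λ₀ mod 3` and this three-bit window form a finite automaton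
whose reachable states carry only the ranks `-1, 0, 1, -ω, -ω²`; these are attained by
`∅, (1), (1,1), (2), (3,1,1)`.
-/

theorem sum_range_ite_emod_eq {M : Type*} [AddCommMonoid M] {s : ℕ} (hs : s ≠ 0) (x : ℤ)
    (f : ℤ → M) : ∑ c ∈ Finset.range s, (if x % s = c then f c else 0) = f (x % s) := by
  obtain ⟨n, hn⟩ : ∃ n : ℕ, x % s = n := ⟨(x % s).toNat, (Int.toNat_of_nonneg
    (Int.emod_nonneg x (by exact_mod_cast hs))).symm⟩
  have hns : n < s := by have := Int.emod_lt_of_pos x (by omega : (0 : ℤ) < s); omega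
  simp_rw [hn, Nat.cast_inj, Finset.sum_ite_eq, Finset.mem_range, if_pos hns]

theorem zpow_emod_of_pow_eq_one {G₀ : Type*} [GroupWithZero G₀] {x : G₀} {s : ℕ}
    (h : x ^ s = 1) (m : ℤ) : x ^ (m % s) = x ^ m := by
  rcases eq_or_ne s 0 with rfl | hs
  · simp
  have hx : x ≠ 0 := by
    rintro rfl
    simp [zero_pow hs] at h
  conv_rhs => rw [← Int.emod_add_mul_ediv m s]
  rw [zpow_add₀ hx, zpow_mul, zpow_natCast, h, one_zpow, mul_one]

namespace YPartition

@[ext]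
theorem ext {P Q : YPartition} (h : P.parts = Q.parts) : P = Q := by
  cases P; cases Q; cases h; rfl

theorem parts_le_parts_zero (P : YPartition) (i : ℕ) : P.parts i ≤ P.parts 0 :=
  P.antitone (Nat.zero_le i)

theorem conjParts_eq_of_forall_lt_iff (P : YPartition) {j m : ℕ}
    (h : ∀ i, j < P.parts i ↔ i < m) : P.conjParts j = m := by
  rw [conjParts, show {i | j < P.parts i} = Set.Iio m from Set.ext h, Set.ncard_Iio_nat]

theorem lt_conjParts_iff (P : YPartition) (i j : ℕ) : i < P.conjParts j ↔ j < P.parts i := by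
  classical
  have hex : ∃ m, P.parts m ≤ j := by
    obtain ⟨N, hN⟩ := P.finite_support
    exact ⟨N, by simp [hN N le_rfl]⟩
  have hrows : ∀ i, j < P.parts i ↔ i < Nat.find hex := fun i =>
    ⟨fun hi => not_le.mp fun hm => (P.antitone hm).trans (Nat.find_spec hex) |>.not_gt hi,
      fun hi => not_le.mp (Nat.find_min hex hi)⟩
  rw [P.conjParts_eq_of_forall_lt_iff hrows, hrows]

def empty : YPartition := ⟨0, fun _ _ _ => le_rfl, ⟨0, fun _ _ => rfl⟩⟩

theorem eq_empty_of_parts_zero_eq_zero {P : YPartition} (h : P.parts 0 = 0) : P = empty :=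
  YPartition.ext (funext fun i => Nat.eq_zero_of_le_zero (h ▸ P.parts_le_parts_zero i))

@[simp] theorem conjParts_empty (j : ℕ) : empty.conjParts j = 0 :=
  conjParts_eq_of_forall_lt_iff _ fun i => by simp [empty]

theorem isCore_empty (t : ℕ) : IsCore t empty := fun i j h => by simp [empty] at h

def cons (q : ℕ) (Q : YPartition) (hq : Q.parts 0 ≤ q) : YPartition where
  parts
    | 0 => q
    | n + 1 => Q.parts n
  antitone a b hab := by
    rcases a with _ | a <;> rcases b with _ | b
    · exact le_rfl
    · exact (Q.parts_le_parts_zero b).trans hq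
    · omega
    · exact Q.antitone (by omega)
  finite_support := by
    obtain ⟨N, hN⟩ := Q.finite_support
    refine ⟨N + 1, fun n hn => ?_⟩
    cases n with
    | zero => omega
    | succ n => exact hN n (by omega)

def tail (P : YPartition) : YPartition where
  parts n := P.parts (n + 1)
  antitone _ _ hab := P.antitone (by omega)
  finite_support := by
    obtain ⟨N, hN⟩ := P.finite_support
    exact ⟨N, fun n hn => hN (n + 1) (by omega)⟩

theorem tail_parts_zero_le (P : YPartition) : P.tail.parts 0 ≤ P.parts 0 :=
  P.parts_le_parts_zero 1

section cons

variable {q : ℕ} {Q : YPartition} {hq : Q.parts 0 ≤ q}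

@[simp] theorem cons_parts_zero : (cons q Q hq).parts 0 = q := rfl

@[simp] theorem cons_parts_succ (n : ℕ) : (cons q Q hq).parts (n + 1) = Q.parts n := rfl

theorem cons_tail (P : YPartition) : cons (P.parts 0) P.tail P.tail_parts_zero_le = P :=
  YPartition.ext (funext fun n => by cases n <;> rfl)

theorem conjParts_cons (j : ℕ) :
    (cons q Q hq).conjParts j = if j < q then Q.conjParts j + 1 else 0 := by
  refine conjParts_eq_of_forall_lt_iff _ fun i => ?_
  split_ifs with hj
  · rcases i with _ | i
    · simpa using hj
    · simp [Q.lt_conjParts_iff]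
  · simpa using (((cons q Q hq).parts_le_parts_zero i).trans (not_lt.mp hj))

theorem hookLength_cons_zero {j : ℕ} (hj : j < q) :
    (cons q Q hq).hookLength 0 j = q - j + Q.conjParts j := by
  simp only [hookLength, conjParts_cons, if_pos hj, cons_parts_zero]
  omega

theorem hookLength_cons_succ {i j : ℕ} (hij : j < Q.parts i) :
    (cons q Q hq).hookLength (i + 1) j = Q.hookLength i j := by
  have hj : j < q := hij.trans_le ((Q.parts_le_parts_zero i).trans hq)
  simp only [hookLength, conjParts_cons, if_pos hj, cons_parts_succ]
  omega

theorem isCore_cons_iff {t : ℕ} :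
    IsCore t (cons q Q hq) ↔ IsCore t Q ∧ ∀ j < q, q - j + Q.conjParts j ≠ t := by
  constructor
  · intro h
    refine ⟨fun i j hij => ?_, fun j hj => ?_⟩
    · simpa [hookLength_cons_succ hij] using h (i + 1) j hij
    · simpa [hookLength_cons_zero hj] using h 0 j hj
  · rintro ⟨hQ, hrow⟩ (_ | i) j hij
    · rw [cons_parts_zero] at hij
      rw [hookLength_cons_zero hij]
      exact hrow j hij
    · rw [cons_parts_succ] at hij
      rw [hookLength_cons_succ hij]
      exact hQ i j hij

end cons

@[elab_as_elim]
theorem induction_on_cons {motive : YPartition → Prop} (P : YPartition) (empty : motive empty)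
    (cons : ∀ q Q hq, motive Q → motive (cons q Q hq)) : motive P := by
  obtain ⟨N, hN⟩ := P.finite_support
  induction N generalizing P with
  | zero => rwa [eq_empty_of_parts_zero_eq_zero (hN 0 le_rfl)]
  | succ N ih =>
    rw [← cons_tail P]
    exact cons _ _ _ (ih P.tail fun n hn => hN (n + 1) (by omega))

def betaSet (P : YPartition) : Set ℤ := Set.range fun i => (P.parts i : ℤ) - i

theorem parts_zero_mem_betaSet (P : YPartition) : (P.parts 0 : ℤ) ∈ P.betaSet :=
  ⟨0, by simp⟩

theorem le_parts_zero_of_mem_betaSet {P : YPartition} {k : ℤ} (hk : k ∈ P.betaSet) :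
    k ≤ P.parts 0 := by
  obtain ⟨i, rfl⟩ := hk
  have := P.parts_le_parts_zero i
  dsimp only
  omega

theorem neg_mem_betaSet_empty (n : ℕ) : -(n : ℤ) ∈ empty.betaSet :=
  ⟨n, by simp [empty]⟩

theorem mem_betaSet_cons {q : ℕ} {Q : YPartition} {hq : Q.parts 0 ≤ q} {k : ℤ} :
    k ∈ (cons q Q hq).betaSet ↔ k = q ∨ k + 1 ∈ Q.betaSet := by
  constructor
  · rintro ⟨_ | i, rfl⟩
    · simp
    · exact Or.inr ⟨i, by dsimp only [cons_parts_succ]; push_cast; ring⟩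
  · rintro (rfl | ⟨i, hi⟩)
    · exact ⟨0, by simp⟩
    · exact ⟨i + 1, by simp only [cons_parts_succ] at hi ⊢; push_cast; omega⟩

theorem IsCore.sub_mem_betaSet_of_cons {t q : ℕ} {Q : YPartition} {hq : Q.parts 0 ≤ q}
    (hcore : IsCore (t + 1) (cons q Q hq)) : (q : ℤ) - t ∈ Q.betaSet := by
  classical
  by_contra hB
  have hbeta_ne : ∀ i, (Q.parts i : ℤ) - i ≠ q - t := fun i h => hB ⟨i, h⟩
  have hex : ∃ i, (Q.parts i : ℤ) - i < q - t :=
    ⟨t, lt_of_le_of_ne (by have := Q.parts_le_parts_zero t; omega) (hbeta_ne t)⟩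
  set i₀ := Nat.find hex
  have hbelow : (Q.parts i₀ : ℤ) - i₀ < q - t := Nat.find_spec hex
  have habove : ∀ i < i₀, (q : ℤ) - t < (Q.parts i : ℤ) - i := fun i hi =>
    lt_of_le_of_ne (not_lt.mp (Nat.find_min hex hi)) (hbeta_ne i).symm
  have hi₀ : i₀ ≤ t := Nat.find_min' hex (lt_of_le_of_ne
    (by have := Q.parts_le_parts_zero t; omega) (hbeta_ne t))
  have hconj : Q.conjParts (i₀ + q - (t + 1)) = i₀ := by
    refine Q.conjParts_eq_of_forall_lt_iff fun i => ⟨fun hi => ?_, fun hi => ?_⟩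
    · by_contra hge
      have := Q.antitone (not_lt.mp hge)
      omega
    · have := habove (i₀ - 1) (by omega)
      have := Q.antitone (show i ≤ i₀ - 1 by omega)
      omega
  -- `i₀` rows of `Q` reach beyond column `i₀ + q - (t + 1)`, so that cell has hook length `t + 1`.
  refine hcore 0 (i₀ + q - (t + 1)) (by simp; omega) ?_
  rw [hookLength_cons_zero (by omega), hconj]
  omega

noncomputable def cells (P : YPartition) : Finset (ℕ × ℕ) :=
  (Finset.range (P.conjParts 0) ×ˢ Finset.range (P.parts 0)).filter fun p => p.2 < P.parts p.1

theorem mem_cells {P : YPartition} {p : ℕ × ℕ} : p ∈ P.cells ↔ p.2 < P.parts p.1 := by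
  simp only [cells, Finset.mem_filter, Finset.mem_product, Finset.mem_range, P.lt_conjParts_iff,
    and_iff_right_iff_imp]
  exact fun h => ⟨by omega, h.trans_le (P.parts_le_parts_zero _)⟩

theorem gbg_eq_sum_cells (P : YPartition) {s : ℕ} (hs : s ≠ 0) :
    P.gbg s = ∑ p ∈ P.cells, Complex.exp (2 * Real.pi * Complex.I / s) ^ ((p.2 : ℤ) - p.1) := by
  classical
  set ζ := Complex.exp (2 * Real.pi * Complex.I / s)
  have hζ : ζ ^ s = 1 := (Complex.isPrimitiveRoot_exp s hs).pow_eq_one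
  have hrcount : ∀ c, P.rcount s c =
      (P.cells.filter fun p => ((p.2 : ℤ) - p.1) % s = c).card := fun c => by
    rw [rcount, ← Set.ncard_coe_finset]
    congr 1
    ext p
    simp [mem_cells]
  simp_rw [gbg, hrcount, Finset.card_filter, Nat.cast_sum, Finset.sum_mul, Nat.cast_ite,
    Nat.cast_one, Nat.cast_zero, ite_mul, one_mul, zero_mul]
  rw [Finset.sum_comm]
  refine Finset.sum_congr rfl fun p _ => ?_
  rw [← zpow_emod_of_pow_eq_one hζ, ← sum_range_ite_emod_eq hs _ (ζ ^ ·)]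
  simp [ζ]

theorem gbg_empty (s : ℕ) : empty.gbg s = 0 := by
  simp [gbg, rcount, empty]

theorem cells_cons {q : ℕ} {Q : YPartition} {hq : Q.parts 0 ≤ q} :
    (cons q Q hq).cells = (Finset.range q).image (fun j => (0, j))
      ∪ Q.cells.image fun p => (p.1 + 1, p.2) := by
  ext ⟨_ | i, j⟩ <;> simp [mem_cells]

theorem gbg_cons {q : ℕ} {Q : YPartition} {hq : Q.parts 0 ≤ q} {s : ℕ} (hs : s ≠ 0) :
    (cons q Q hq).gbg s = ∑ j ∈ Finset.range q, Complex.exp (2 * Real.pi * Complex.I / s) ^ j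
      + (Complex.exp (2 * Real.pi * Complex.I / s))⁻¹ * Q.gbg s := by
  rw [gbg_eq_sum_cells _ hs, gbg_eq_sum_cells _ hs, cells_cons, Finset.sum_union,
    Finset.sum_image, Finset.sum_image, Finset.mul_sum]
  · congr 1
    refine Finset.sum_congr rfl fun p _ => ?_
    rw [← zpow_neg_one, ← zpow_add₀ (Complex.exp_ne_zero _)]
    push_cast
    ring_nf
  · intro _ _ _ _ h
    simpa [Prod.ext_iff] using h
  · intro _ _ _ _ h
    simpa using h
  · rw [Finset.disjoint_left]
    simp

end YPartition

local notation "ω" => Complex.exp (2 * Real.pi * Complex.I / 3)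

theorem isPrimitiveRoot_omega : IsPrimitiveRoot ω 3 := by
  simpa using Complex.isPrimitiveRoot_exp 3 (by norm_num)

theorem one_add_omega_add_omega_sq : 1 + ω + ω ^ 2 = 0 := by
  simpa [Finset.sum_range_succ] using isPrimitiveRoot_omega.geom_sum_eq_zero (by norm_num)

theorem one_add_omega : 1 + ω = -ω ^ 2 := by
  linear_combination one_add_omega_add_omega_sq

theorem omega_inv : ω⁻¹ = ω ^ 2 :=
  inv_eq_of_mul_eq_one_right (by rw [← pow_succ', isPrimitiveRoot_omega.pow_eq_one])

/-- Coordinates of `∑ j < r, ω ^ j` in the basis `1, ω`, for `r < 3`. -/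
def rowCoeffs : ℕ → ℤ × ℤ
  | 0 => (0, 0)
  | 1 => (1, 0)
  | _ => (1, 1)

theorem geom_sum_omega (q : ℕ) :
    ∑ j ∈ Finset.range q, ω ^ j = (rowCoeffs (q % 3)).1 + (rowCoeffs (q % 3)).2 * ω := by
  have hω := isPrimitiveRoot_omega
  have hsum : ∑ j ∈ Finset.range q, ω ^ j = ∑ j ∈ Finset.range (q % 3), ω ^ j := by
    rw [geom_sum_eq (hω.ne_one (by norm_num)), geom_sum_eq (hω.ne_one (by norm_num)),
      pow_eq_pow_mod q hω.pow_eq_one]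
  have hr : q % 3 < 3 := Nat.mod_lt q (by norm_num)
  rw [hsum]
  interval_cases q % 3 <;> simp [rowCoeffs, Finset.sum_range_succ]

/-- The data remembered while a partition is read from its last row up: `(a, b, ρ, w₁, w₂, w₃)`
stands for rank `a + b ω`, first row `λ₀ ≡ ρ (mod 3)`, and `wₖ` records whether `λ₀ - k` is a
beta number. -/
abbrev ScanState : Type := ℤ × ℤ × ℕ × Bool × Bool × Bool

namespace ScanState

def window : ScanState → ℕ → Bool
  | (_, _, _, w, _, _), 1 => w
  | (_, _, _, _, w, _), 2 => w
  | (_, _, _, _, _, w), 3 => w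
  | _, _ => false

/-- The window of the partition obtained by adding a first row `δ` cells longer than the
current one: `λ₀ - k + 1` is above, at, or `k - (δ + 1)` below the old first beta number. -/
def shiftedWindow (σ : ScanState) (δ k : ℕ) : Bool :=
  if k ≤ δ then false else if k = δ + 1 then true else window σ (k - (δ + 1))

def step : ScanState → ℕ → ScanState
  | σ@(a, b, ρ, _), δ =>
    (b - a + (rowCoeffs ((ρ + δ) % 3)).1, -a + (rowCoeffs ((ρ + δ) % 3)).2, (ρ + δ) % 3,
      shiftedWindow σ δ 1, shiftedWindow σ δ 2, shiftedWindow σ δ 3)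

def initial : ScanState := (0, 0, 0, true, true, true)

def reachable : List ScanState :=
  [(-1, 0, 0, false, false, false), (-1, 0, 0, false, false, true),
   (0, -1, 0, false, false, false), (0, -1, 0, false, true, false),
   (0, -1, 1, false, false, false), (0, -1, 1, false, false, true),
   (0, -1, 1, true, false, false), (0, -1, 1, true, false, true),
   (0, 0, 0, false, false, false), (0, 0, 0, false, false, true),
   (0, 0, 0, false, true, false), (0, 0, 0, false, true, true),
   (0, 0, 0, true, false, false), (0, 0, 0, true, false, true),
   (0, 0, 0, true, true, false), (0, 0, 0, true, true, true),
   (0, 0, 1, false, false, false), (0, 0, 1, false, true, false),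
   (0, 0, 1, true, false, false), (0, 0, 1, true, true, false),
   (0, 0, 2, false, false, false), (0, 0, 2, false, true, false),
   (0, 0, 2, true, false, false), (0, 0, 2, true, true, false),
   (1, 0, 1, false, false, false), (1, 0, 1, false, false, true),
   (1, 0, 1, false, true, false), (1, 0, 1, false, true, true),
   (1, 0, 2, false, false, false), (1, 0, 2, false, false, true),
   (1, 0, 2, true, false, false), (1, 0, 2, true, false, true),
   (1, 1, 0, false, false, false), (1, 1, 0, true, false, false),
   (1, 1, 2, false, false, false), (1, 1, 2, false, false, true),
   (1, 1, 2, false, true, false), (1, 1, 2, false, true, true)]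

theorem initial_mem_reachable : initial ∈ reachable := by decide

theorem step_mem_reachable :
    ∀ σ ∈ reachable, ∀ δ < 4, shiftedWindow σ δ 4 = true → step σ δ ∈ reachable := by
  decide

theorem rank_mem_of_mem_reachable :
    ∀ σ ∈ reachable, (σ.1, σ.2.1) ∈ [(-1, 0), (0, -1), (0, 0), (1, 0), (1, 1)] := by
  decide

end ScanState

namespace YPartition

open ScanState

theorem gbg_three_cons {q : ℕ} {Q : YPartition} {hq : Q.parts 0 ≤ q} :
    (cons q Q hq).gbg 3 = ∑ j ∈ Finset.range q, ω ^ j + ω ^ 2 * Q.gbg 3 := by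
  simpa [omega_inv] using gbg_cons (q := q) (Q := Q) (hq := hq) (s := 3) (by norm_num)

def HasScanState (P : YPartition) : ScanState → Prop
  | σ@(a, b, ρ, _) => P.gbg 3 = a + b * ω ∧ P.parts 0 % 3 = ρ ∧
      ∀ k : ℕ, 1 ≤ k → k ≤ 3 → ((P.parts 0 : ℤ) - k ∈ P.betaSet ↔ window σ k = true)

theorem hasScanState_empty_initial : HasScanState empty initial := by
  refine ⟨by simp [gbg_empty], rfl, fun k hk1 hk3 => ?_⟩
  have hneg := neg_mem_betaSet_empty k
  interval_cases k <;> simpa [empty, window, initial] using hneg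

theorem mem_betaSet_iff_shiftedWindow {Q : YPartition} {σ : ScanState}
    (hσ : ∀ k : ℕ, 1 ≤ k → k ≤ 3 → ((Q.parts 0 : ℤ) - k ∈ Q.betaSet ↔ window σ k = true))
    {q k : ℕ} (hq : Q.parts 0 ≤ q) (hk1 : 1 ≤ k) (hk4 : k ≤ 4) :
    (q : ℤ) - k + 1 ∈ Q.betaSet ↔ shiftedWindow σ (q - Q.parts 0) k = true := by
  unfold shiftedWindow
  split_ifs with hbelow hat
  · simp only [iff_false]
    exact fun h => by have := le_parts_zero_of_mem_betaSet h; omega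
  · simpa [show (q : ℤ) - k + 1 = Q.parts 0 by omega] using Q.parts_zero_mem_betaSet
  · rw [← hσ (k - (q - Q.parts 0 + 1)) (by omega) (by omega)]
    congr! 1
    omega

theorem HasScanState.cons {q : ℕ} {Q : YPartition} {hq : Q.parts 0 ≤ q} {σ : ScanState}
    (hσ : HasScanState Q σ) (hcore : IsCore 4 (cons q Q hq)) :
    q - Q.parts 0 < 4 ∧ shiftedWindow σ (q - Q.parts 0) 4 = true ∧
      HasScanState (cons q Q hq) (step σ (q - Q.parts 0)) := by
  obtain ⟨a, b, ρ, w⟩ := σ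
  obtain ⟨hgbg, hρ, hwindow⟩ := hσ
  have hcore_beta : (q : ℤ) - 4 + 1 ∈ Q.betaSet := by
    simpa [sub_add] using hcore.sub_mem_betaSet_of_cons (t := 3)
  refine ⟨?_, (mem_betaSet_iff_shiftedWindow hwindow hq le_add_self le_rfl).mp hcore_beta,
    ?_, ?_, fun k hk1 hk3 => ?_⟩
  · have := le_parts_zero_of_mem_betaSet hcore_beta
    omega
  · have hq_mod : q % 3 = (ρ + (q - Q.parts 0)) % 3 := by omega
    rw [gbg_three_cons, geom_sum_omega, hgbg, hq_mod]
    push_cast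
    linear_combination (a : ℂ) * one_add_omega_add_omega_sq
      + (b : ℂ) * isPrimitiveRoot_omega.pow_eq_one
  · simp only [cons_parts_zero]
    omega
  · rw [cons_parts_zero, mem_betaSet_cons, or_iff_right (by omega),
      mem_betaSet_iff_shiftedWindow hwindow hq hk1 (by omega)]
    interval_cases k <;> rfl

theorem exists_hasScanState_of_isCore (P : YPartition) (hP : IsCore 4 P) :
    ∃ σ ∈ reachable, HasScanState P σ := by
  induction P using induction_on_cons with
  | empty => exact ⟨initial, initial_mem_reachable, hasScanState_empty_initial⟩
  | cons q Q hq ih =>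
    obtain ⟨σ, hσ, hscan⟩ := ih (isCore_cons_iff.mp hP).1
    obtain ⟨hδ, hvalid, hscan'⟩ := hscan.cons hP
    exact ⟨_, step_mem_reachable σ hσ _ hδ hvalid, hscan'⟩

theorem gbg_three_mem_of_isCore {P : YPartition} (hP : IsCore 4 P) :
    P.gbg 3 ∈ ({-1, 0, 1, -ω, -ω ^ 2} : Set ℂ) := by
  obtain ⟨⟨a, b, ρ, w⟩, hσ, hgbg, -⟩ := exists_hasScanState_of_isCore P hP
  have hab := rank_mem_of_mem_reachable _ hσ
  simp only [List.mem_cons, Prod.mk.injEq, List.not_mem_nil, or_false] at hab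
  rw [hgbg]
  rcases hab with ⟨rfl, rfl⟩ | ⟨rfl, rfl⟩ | ⟨rfl, rfl⟩ | ⟨rfl, rfl⟩ | ⟨rfl, rfl⟩ <;>
    simp [one_add_omega]

theorem exists_isCore_gbg_three_eq :
    ∀ z ∈ ({-1, 0, 1, -ω, -ω ^ 2} : Set ℂ), ∃ P : YPartition, IsCore 4 P ∧ P.gbg 3 = z := by
  have h₁ : empty.parts 0 ≤ 1 := by simp [empty]
  have h₂ : empty.parts 0 ≤ 2 := by simp [empty]
  have h₁₁ : (cons 1 empty h₁).parts 0 ≤ 1 := le_rfl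
  have h₃₁₁ : (cons 1 (cons 1 empty h₁) h₁₁).parts 0 ≤ 3 := by simp
  simp only [Set.mem_insert_iff, Set.mem_singleton_iff, forall_eq_or_imp, forall_eq]
  refine ⟨⟨cons 3 (cons 1 (cons 1 empty h₁) h₁₁) h₃₁₁, ?_, ?_⟩,
    ⟨empty, isCore_empty 4, gbg_empty 3⟩, ⟨cons 1 empty h₁, ?_, ?_⟩,
    ⟨cons 1 (cons 1 empty h₁) h₁₁, ?_, ?_⟩, ⟨cons 2 empty h₂, ?_, ?_⟩⟩
  all_goals simp +decide only [isCore_cons_iff, conjParts_cons, conjParts_empty, isCore_empty,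
    gbg_three_cons, gbg_empty, Finset.sum_range_succ, Finset.sum_range_zero]
  · linear_combination 2 * one_add_omega_add_omega_sq + ω * isPrimitiveRoot_omega.pow_eq_one
  · ring
  · linear_combination one_add_omega_add_omega_sq
  · linear_combination one_add_omega_add_omega_sq

end YPartition

/-- The GBG-rank mod 3 of a 4-core takes exactly the five values
`−1, 0, 1, −ω, −ω²`, where `ω = e^{2πI/3}`. -/
theorem gbg_stmt_13 :
    {z : ℂ | ∃ P : YPartition, YPartition.IsCore 4 P ∧ P.gbg 3 = z} =
      ({-1, 0, 1, -Complex.exp (2 * (Real.pi : ℂ) * Complex.I / 3),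
        -Complex.exp (2 * (Real.pi : ℂ) * Complex.I / 3) ^ 2} : Set ℂ) := by
  refine Set.Subset.antisymm ?_ YPartition.exists_isCore_gbg_three_eq
  rintro _ ⟨P, hP, rfl⟩
  exact YPartition.gbg_three_mem_of_isCore hP
end
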